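/- Let K be an algebraically closed field of characteristic 0 and let n_1,…,n_k, d_1,…,d_k be positive integers. Set r = min_i ⌈(d_i+2)/2⌉ and J = {i : ⌈(d_i+2)/2⌉ = r}, and assume r ≥ 3. Let S be a set of r distinct points of ℙ^{n_1}×⋯×ℙ^{n_k}. Suppose there exists i ∈ J such that for every ℓ ≠ i the ℓ-th components of all points of S are pairwise proportional, while the i-th components of the points of S are NOT collinear (their representative vectors span a subspace of K^{n_i+1} of dimension ≥ 3). Then the double points 2S impose independent conditions in multidegree (d_1,…,d_k). (Equivalently, ν(S) ∉ Ter_r(SV^{d_1,…,d_k}_{n_1×⋯×n_k}).) -/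

import Mathlib

/-!
By Euler's identity in each block, the gradient of a form of multidegree `d` at a point `p`
satisfies `d i * ⟪p ℓ, ∇_ℓ F(p)⟫ = d ℓ * ⟪p i, ∇_i F(p)⟫` for every `ℓ ≠ i`. These are `r (k - 1)`
independent linear conditions on the `r (∑ n + k)` gradient coordinates at the points of `S`, so
the double points impose `r (∑ n + 1)` conditions as soon as every gradient vector allowed by
them is attained.

Attaining them is local, thanks to bumps in the variables of block `i`: for each point `a`, a
product of squares of linear forms in block `i` that is `1` at `S a` and vanishes doubly at every
other point. Because the `i`-th components are pairwise non-proportional and not collinear, one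
linear form can vanish at two other points at once, so `r - 2` squares, of total degree `2r - 4`,
suffice; this is why `d i ≥ 2r - 3` leaves room for one more linear factor. Multiplying a bump by
a linear form and by powers of linear forms in the other blocks then prescribes the gradient at
`S a`.
-/

open MvPolynomial

/-- Multihomogeneous polynomials of multidegree `d` in the blocks of variables
`x_{i,0}, …, x_{i,n i}` (`i : Fin k`), all of whose first-order partial derivatives vanish at
every point of the family `p` of points of `ℙ^{n 1} × ⋯ × ℙ^{n k}`. -/
noncomputable def svDblVanish (K : Type) [Field K] (k : ℕ) (n d : Fin k → ℕ) {ι : Type}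
    (p : ι → (i : Fin k) → (Fin (n i + 1) → K)) :
    Submodule K (MvPolynomial ((i : Fin k) × Fin (n i + 1)) K) :=
  weightedHomogeneousSubmodule K (fun v => Pi.single v.1 1) d ⊓
    ⨅ (a : ι) (v : (i : Fin k) × Fin (n i + 1)),
      LinearMap.ker
        ((aeval fun w : (i : Fin k) × Fin (n i + 1) => p a w.1 w.2).toLinearMap
          ∘ₗ (pderiv v).toLinearMap)

open Matrix Module Submodule

section LinearAlgebra

variable {K : Type} [Field K]

theorem exists_dotProduct_eq_one_of_notMem_span {m : Type} [Fintype m] [DecidableEq m]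
    {s : Set (m → K)} {x : m → K} (hx : x ∉ span K s) :
    ∃ u : m → K, (∀ y ∈ s, u ⬝ᵥ y = 0) ∧ u ⬝ᵥ x = 1 := by
  obtain ⟨f, hfx, hfs⟩ := (span K s).exists_dual_map_eq_bot_of_notMem hx inferInstance
  refine ⟨(f x)⁻¹ • (dotProductEquiv K m).symm f, fun y hy => ?_, ?_⟩ <;>
    rw [smul_dotProduct, ← dotProductEquiv_apply_apply, LinearEquiv.apply_symm_apply, smul_eq_mul]
  · have hy' : f y ∈ (span K s).map f := mem_map_of_mem (subset_span hy)
    rw [hfs, mem_bot] at hy'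
    rw [hy', mul_zero]
  · exact inv_mul_cancel₀ hfx

theorem exists_dotProduct_eq_one {m : Type} [Fintype m] [DecidableEq m] {x : m → K}
    (hx : x ≠ 0) : ∃ u : m → K, u ⬝ᵥ x = 1 := by
  obtain ⟨u, -, hu⟩ := exists_dotProduct_eq_one_of_notMem_span (s := ∅) (x := x) (by simpa)
  exact ⟨u, hu⟩

variable {V ι : Type} [AddCommGroup V] [Module K V]

theorem exists_apply_notMem_span_of_card_lt {v : ι → V} (s : Finset V)
    (h : s.card < finrank K (span K (Set.range v))) : ∃ b, v b ∉ span K (s : Set V) := by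
  by_contra! hv
  have : span K (Set.range v) ≤ span K (s : Set V) := span_le.2 (Set.range_subset_iff.2 hv)
  exact (finrank_mono this).trans (finrank_span_finset_le_card s) |>.not_gt h

theorem exists_notMem_span_pair [DecidableEq V] {v : ι → V} {a : ι} (hva : v a ≠ 0)
    (hv : 3 ≤ finrank K (span K (Set.range v))) :
    ∃ b c, b ≠ c ∧ v a ∉ span K {v b, v c} := by
  obtain ⟨b, hb⟩ := exists_apply_notMem_span_of_card_lt (K := K) (v := v) {v a} (by simp; omega)
  obtain ⟨c, hc⟩ := exists_apply_notMem_span_of_card_lt (K := K) (v := v) {v a, v b}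
    ((Finset.card_le_two).trans_lt (by omega))
  simp only [Finset.coe_insert, Finset.coe_singleton] at hb hc
  refine ⟨b, c, by rintro rfl; exact hc (subset_span (by simp)), fun h => ?_⟩
  rw [Set.pair_comm] at h
  by_cases hab : v a ∈ span K {v b}
  · obtain ⟨x, hx⟩ := mem_span_singleton.1 hab
    have hx0 : x ≠ 0 := by rintro rfl; exact hva (by rw [← hx, zero_smul])
    exact hb (mem_span_singleton.2 ⟨x⁻¹, by rw [← hx, smul_smul, inv_mul_cancel₀ hx0, one_smul]⟩)
  · exact hc (mem_span_insert_exchange h hab)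

end LinearAlgebra

namespace SegreVeronese

open Finset

abbrev Var (k : ℕ) (n : Fin k → ℕ) : Type := (i : Fin k) × Fin (n i + 1)

abbrev Point (K : Type) {k : ℕ} (n : Fin k → ℕ) : Type := (i : Fin k) → Fin (n i + 1) → K

abbrev blockWeight {k : ℕ} {n : Fin k → ℕ} (v : Var k n) : Fin k → ℕ := Pi.single v.1 1

abbrev multihomogeneousForms (K : Type) [CommSemiring K] {k : ℕ} (n d : Fin k → ℕ) :
    Submodule K (MvPolynomial (Var k n) K) :=
  weightedHomogeneousSubmodule K blockWeight d

section Polynomials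

variable {K : Type} [CommRing K] {k : ℕ} {n : Fin k → ℕ}

noncomputable def evalAt (p : Point K n) : MvPolynomial (Var k n) K →ₐ[K] K :=
  aeval fun v => p v.1 v.2

@[simp] theorem evalAt_X (p : Point K n) (v : Var k n) : evalAt p (X v) = p v.1 v.2 :=
  aeval_X _ _

variable (n) in
noncomputable def linForm (ℓ : Fin k) (u : Fin (n ℓ + 1) → K) : MvPolynomial (Var k n) K :=
  ∑ j, C (u j) * X ⟨ℓ, j⟩

@[simp] theorem evalAt_linForm (p : Point K n) (ℓ : Fin k) (u : Fin (n ℓ + 1) → K) :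
    evalAt p (linForm n ℓ u) = u ⬝ᵥ p ℓ := by
  simp [linForm, dotProduct]

@[simp] theorem pderiv_linForm_self (ℓ : Fin k) (u : Fin (n ℓ + 1) → K) (j : Fin (n ℓ + 1)) :
    pderiv ⟨ℓ, j⟩ (linForm n ℓ u) = C (u j) := by
  classical
  simp [linForm, pderiv_X, Pi.single_apply]

theorem pderiv_linForm_of_ne {ℓ m : Fin k} (hm : m ≠ ℓ) (u : Fin (n ℓ + 1) → K)
    (j : Fin (n m + 1)) : pderiv ⟨m, j⟩ (linForm n ℓ u) = 0 := by
  classical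
  simp [linForm, pderiv_X, hm]

theorem isWeightedHomogeneous_linForm (ℓ : Fin k) (u : Fin (n ℓ + 1) → K) :
    (linForm n ℓ u).IsWeightedHomogeneous blockWeight (Pi.single ℓ 1) :=
  IsWeightedHomogeneous.sum _ _ _ fun _ _ => (isWeightedHomogeneous_X _ _ _).C_mul _

theorem isWeightedHomogeneous_linForm_pow (ℓ : Fin k) (u : Fin (n ℓ + 1) → K) (e : ℕ) :
    (linForm n ℓ u ^ e).IsWeightedHomogeneous blockWeight (Pi.single ℓ e) := by
  convert (isWeightedHomogeneous_linForm ℓ u).pow e using 1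
  ext m
  simp [Pi.single_apply]

theorem weight_blockWeight_apply (m : Var k n →₀ ℕ) (ℓ : Fin k) :
    Finsupp.weight blockWeight m ℓ = ∑ j, m ⟨ℓ, j⟩ := by
  rw [Finsupp.weight_eq_sum, Finset.sum_apply, Fintype.sum_sigma, Fintype.sum_eq_single ℓ]
  · simp
  · intro m hm
    simp [Pi.single_eq_of_ne' hm]

theorem dotProduct_blockGrad {d : Fin k → ℕ} {F : MvPolynomial (Var k n) K}
    (hF : F.IsWeightedHomogeneous blockWeight d) (p : Point K n) (ℓ : Fin k) :
    p ℓ ⬝ᵥ (fun j => evalAt p (pderiv ⟨ℓ, j⟩ F)) = d ℓ * evalAt p F := by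
  classical
  have hℓ : F.IsWeightedHomogeneous (fun v => blockWeight v ℓ) (d ℓ) := fun m hm => by
    rw [← hF hm]
    simp [Finsupp.weight_eq_sum, Finset.sum_apply]
  have euler := congrArg (evalAt p) hℓ.sum_weight_X_mul_pderiv
  rw [map_sum, Fintype.sum_sigma, Fintype.sum_eq_single ℓ] at euler
  · simpa [dotProduct] using euler
  · intro m hm
    simp [Pi.single_eq_of_ne' hm]

def VanishesDoublyAt (p : Point K n) (F : MvPolynomial (Var k n) K) : Prop :=
  evalAt p F = 0 ∧ ∀ v, evalAt p (pderiv v F) = 0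

theorem vanishesDoublyAt_sq_mul {p : Point K n} {f : MvPolynomial (Var k n) K}
    (hf : evalAt p f = 0) (g : MvPolynomial (Var k n) K) : VanishesDoublyAt p (f ^ 2 * g) :=
  ⟨by simp [hf], fun v => by simp [hf]⟩

theorem VanishesDoublyAt.mul_left {p : Point K n} {f : MvPolynomial (Var k n) K}
    (hf : VanishesDoublyAt p f) (g : MvPolynomial (Var k n) K) : VanishesDoublyAt p (g * f) :=
  ⟨by simp [hf.1], fun v => by simp [hf.1, hf.2 v]⟩

theorem pderiv_prod_eq_zero {ι : Type} (v : Var k n) (s : Finset ι)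
    (f : ι → MvPolynomial (Var k n) K) (h : ∀ x ∈ s, pderiv v (f x) = 0) :
    pderiv v (∏ x ∈ s, f x) = 0 :=
  prod_induction f (fun g => pderiv v g = 0) (fun g g' hg hg' => by simp [hg, hg'])
    pderiv_one h

end Polynomials

section Dimension

variable {k : ℕ} {n : Fin k → ℕ}

noncomputable def monomialsEquiv (d : Fin k → ℕ) :
    {m : Var k n →₀ ℕ // Finsupp.weight blockWeight m = d} ≃
      ((i : Fin k) → Sym (Fin (n i + 1)) (d i)) :=
  (Finsupp.sigmaFinsuppEquivPiFinsupp.subtypeEquiv fun m => by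
      simp [funext_iff, weight_blockWeight_apply, Finsupp.sum_fintype]).trans
    ((Equiv.subtypePiEquivPi).trans (Equiv.piCongrRight fun i => (Sym.equivNatSum _ _).symm))

theorem natCard_monomials (d : Fin k → ℕ) :
    Nat.card {m : Var k n →₀ ℕ // Finsupp.weight blockWeight m = d} =
      ∏ i, (n i + d i).choose (n i) := by
  rw [Nat.card_congr (monomialsEquiv d), Nat.card_pi]
  refine prod_congr rfl fun i _ => ?_
  rw [Sym.natCard_sym_eq_choose, Nat.card_fin, Nat.add_right_comm, Nat.add_sub_cancel,
    Nat.choose_symm_add]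

theorem finrank_multihomogeneousForms (K : Type) [CommRing K] [Nontrivial K]
    (d : Fin k → ℕ) :
    finrank K (multihomogeneousForms K n d) =
      ∏ i, (n i + d i).choose (n i) := by
  rw [multihomogeneousForms, weightedHomogeneousSubmodule_eq_finsupp_supported,
    (AddMonoidAlgebra.supportedEquivFinsupp _).finrank_eq, finrank, rank_finsupp_self']
  exact natCard_monomials d

end Dimension

section Interpolation

variable {K : Type} [Field K] {k : ℕ} {n : Fin k → ℕ}

structure NoncollinearBlock {r : ℕ} (S : Fin r → Point K n) (i : Fin k) : Prop where
  ne_zero : ∀ a, S a i ≠ 0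
  not_proportional : ∀ a b, a ≠ b → ∀ c : K, S a i ≠ c • S b i
  three_le_finrank : 3 ≤ finrank K (span K (Set.range fun a => S a i))

theorem exists_offBlock_eq_one {p : Point K n} (hp : ∀ ℓ, p ℓ ≠ 0) (δ : Fin k → ℕ) (i : Fin k) :
    ∃ P ∈ multihomogeneousForms K n (Function.update δ i 0),
      evalAt p P = 1 ∧ ∀ j, pderiv ⟨i, j⟩ P = 0 := by
  choose z hz using fun ℓ => exists_dotProduct_eq_one (hp ℓ)
  refine ⟨∏ ℓ, linForm n ℓ (z ℓ) ^ Function.update δ i 0 ℓ, ?_, ?_, fun j => ?_⟩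
  · have h := IsWeightedHomogeneous.prod univ _ _ fun ℓ _ =>
      isWeightedHomogeneous_linForm_pow ℓ (z ℓ) (Function.update δ i 0 ℓ)
    rwa [univ_sum_single] at h
  · simp [hz]
  · refine pderiv_prod_eq_zero _ _ _ fun ℓ _ => ?_
    by_cases hℓ : ℓ = i
    · subst hℓ; simp
    · rw [pderiv_pow, pderiv_linForm_of_ne (Ne.symm hℓ), mul_zero]

variable {r : ℕ} {S : Fin r → Point K n} {i : Fin k}

theorem exists_bump (hS : NoncollinearBlock S i) (a : Fin r) {e : ℕ} (he : 2 * r - 4 ≤ e) :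
    ∃ Q ∈ multihomogeneousForms K n (Pi.single i e),
      evalAt (S a) Q = 1 ∧ ∀ b ≠ a, VanishesDoublyAt (S b) Q := by
  classical
  obtain ⟨b, c, hbc, habc⟩ := exists_notMem_span_pair (hS.ne_zero a) hS.three_le_finrank
  obtain ⟨β, hβ, hβa⟩ := exists_dotProduct_eq_one_of_notMem_span habc
  have hsep : ∀ x, ∃ u : Fin (n i + 1) → K, u ⬝ᵥ S x i = 0 ∧ (x ≠ a → u ⬝ᵥ S a i = 1) := by
    intro x
    by_cases hx : x = a
    · exact ⟨0, by simp, fun h => (h hx).elim⟩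
    have hax : S a i ∉ span K {S x i} := by
      rw [mem_span_singleton]
      rintro ⟨c, hc⟩
      exact hS.not_proportional a x (Ne.symm hx) c hc.symm
    obtain ⟨u, hu, hua⟩ := exists_dotProduct_eq_one_of_notMem_span hax
    exact ⟨u, hu _ rfl, fun _ => hua⟩
  choose u hu using hsep
  have hab : a ≠ b := by rintro rfl; exact habc (subset_span (by simp))
  have hac : a ≠ c := by rintro rfl; exact habc (subset_span (by simp))
  set E : Finset (Fin r) := univ \ {a, b, c} with hE
  have hEcard : #E + 3 = r := by
    have h3 : #({a, b, c} : Finset (Fin r)) = 3 := by simp [hab, hac, hbc]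
    have := card_le_univ ({a, b, c} : Finset (Fin r))
    rw [card_sdiff_of_subset (subset_univ _), card_univ, Fintype.card_fin]
    simp only [Fintype.card_fin] at this
    omega
  have hEa : ∀ x ∈ E, x ≠ a := fun x hx => by rintro rfl; simp [hE] at hx
  refine ⟨linForm n i β ^ (e - 2 * #E) * ∏ x ∈ E, linForm n i (u x) ^ 2, ?_, ?_, fun x hx => ?_⟩
  · have h := (isWeightedHomogeneous_linForm_pow i β (e - 2 * #E)).mul
      (IsWeightedHomogeneous.prod E _ _ fun x _ => isWeightedHomogeneous_linForm_pow i (u x) 2)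
    have hdeg : Pi.single i (e - 2 * #E) + ∑ _ ∈ E, Pi.single i 2 =
        Pi.single (M := fun _ => ℕ) i e := by
      rw [sum_const, ← Pi.single_smul', ← Pi.single_add, smul_eq_mul]
      congr 1
      omega
    rwa [hdeg] at h
  · rw [map_mul, map_pow, map_prod, evalAt_linForm, hβa, one_pow, one_mul]
    exact prod_eq_one fun x hx => by rw [map_pow, evalAt_linForm, (hu x).2 (hEa x hx), one_pow]
  · by_cases hxE : x ∈ E
    · rw [← mul_prod_erase E _ hxE, mul_left_comm]
      exact vanishesDoublyAt_sq_mul (by rw [evalAt_linForm, (hu x).1]) _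
    · have hx' : x = b ∨ x = c := by simpa [hE, hx, or_iff_not_imp_left] using hxE
      have hβx : β ⬝ᵥ S x i = 0 := hβ _ (by rcases hx' with rfl | rfl <;> simp)
      rw [show e - 2 * #E = 2 + (e - 2 * #E - 2) by omega, pow_add, mul_assoc]
      exact vanishesDoublyAt_sq_mul (by rw [evalAt_linForm, hβx]) _

theorem exists_blockGrad_eq (hS : NoncollinearBlock S i) {e : ℕ} (he : 2 * r - 3 ≤ e)
    (he0 : (e : K) ≠ 0) (a : Fin r) (t : Fin (n i + 1) → K) :
    ∃ G ∈ multihomogeneousForms K n (Pi.single i e),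
      (∀ b ≠ a, VanishesDoublyAt (S b) G) ∧ ∀ j, evalAt (S a) (pderiv ⟨i, j⟩ G) = t j := by
  have he1 : 1 ≤ e := Nat.one_le_iff_ne_zero.2 fun h => he0 (by simp [h])
  obtain ⟨Q, hQ, hQa, hQb⟩ := exists_bump hS a (e := e - 1) (by omega)
  set q : Fin (n i + 1) → K := fun j => evalAt (S a) (pderiv ⟨i, j⟩ Q)
  have hq : S a i ⬝ᵥ q = e - 1 := by
    simpa [hQa, Nat.cast_sub he1] using dotProduct_blockGrad hQ (S a) i
  -- Euler's identity forces the new linear factor `L` to satisfy `L (S a) = s`; its own gradient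
  -- `t - s • q` then offsets the term `L (S a) • q = s • q` coming from `∇ Q`.
  set s : K := (t ⬝ᵥ S a i) / e
  have hL : (t - s • q) ⬝ᵥ S a i = s := by
    rw [sub_dotProduct, smul_dotProduct, dotProduct_comm q, hq, smul_eq_mul]
    simp only [s]
    field_simp
    ring
  refine ⟨linForm n i (t - s • q) * Q, ?_, fun b hb => (hQb b hb).mul_left _, fun j => ?_⟩
  · have h := (isWeightedHomogeneous_linForm i (t - s • q)).mul hQ
    rwa [← Pi.single_add, Nat.add_sub_cancel' he1] at h
  · simp [hQa, hL, q]

variable {d : Fin k → ℕ}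

theorem exists_mem_blockGrad_eq (hS : NoncollinearBlock S i) (hS0 : ∀ a ℓ, S a ℓ ≠ 0)
    (hdi : 2 * r - 3 ≤ d i) (hd0 : (d i : K) ≠ 0) (a : Fin r) (t : Fin (n i + 1) → K) :
    ∃ F ∈ multihomogeneousForms K n d,
      (∀ b ≠ a, VanishesDoublyAt (S b) F) ∧ ∀ j, evalAt (S a) (pderiv ⟨i, j⟩ F) = t j := by
  obtain ⟨P, hP, hPa, hPi⟩ := exists_offBlock_eq_one (hS0 a) d i
  obtain ⟨G, hG, hGb, hGa⟩ := exists_blockGrad_eq hS hdi hd0 a t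
  refine ⟨P * G, ?_, fun b hb => (hGb b hb).mul_left P, fun j => by simp [hPi, hPa, hGa]⟩
  have hdeg : Function.update d i 0 + Pi.single i (d i) = d := by
    ext m
    by_cases hm : m = i
    · subst hm; simp
    · simp [hm]
  have h := IsWeightedHomogeneous.mul hP hG
  rwa [hdeg] at h

theorem exists_mem_grad_eq_ite (hS : NoncollinearBlock S i) (hS0 : ∀ a ℓ, S a ℓ ≠ 0)
    (hdi : 2 * r - 3 ≤ d i) {ℓ : Fin k} (hℓ : ℓ ≠ i) (hdℓ : 1 ≤ d ℓ) (a : Fin r)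
    (g : Var k n → K) (hg : S a ℓ ⬝ᵥ (fun j => g ⟨ℓ, j⟩) = 0) :
    ∃ F ∈ multihomogeneousForms K n d, (∀ b ≠ a, VanishesDoublyAt (S b) F) ∧
      ∀ v, evalAt (S a) (pderiv v F) = if v.1 = ℓ then g v else 0 := by
  classical
  obtain ⟨P, hP, hPa, -⟩ := exists_offBlock_eq_one (hS0 a) (d - Pi.single ℓ 1) i
  obtain ⟨Q, hQ, hQa, hQb⟩ := exists_bump hS a (e := d i) (by omega)
  set L := linForm n ℓ fun j => g ⟨ℓ, j⟩
  have hLa : evalAt (S a) L = 0 := by rw [evalAt_linForm, dotProduct_comm, hg]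
  refine ⟨L * (P * Q), ?_, fun b hb => ((hQb b hb).mul_left P).mul_left L, ?_⟩
  · have hdeg : Pi.single ℓ 1 + (Function.update (d - Pi.single ℓ 1) i 0 + Pi.single i (d i)) =
        d := by
      ext m
      by_cases hmi : m = i
      · subst hmi; simp [Pi.single_eq_of_ne' hℓ]
      by_cases hmℓ : m = ℓ
      · subst hmℓ; simp [hmi, Nat.add_sub_cancel' hdℓ]
      · simp [hmi, hmℓ]
    have h := (isWeightedHomogeneous_linForm ℓ fun j => g ⟨ℓ, j⟩).mul (hP.mul hQ)
    rwa [hdeg] at h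
  · rintro ⟨m, j⟩
    by_cases hm : m = ℓ
    · subst hm; simp [L, hLa, hPa, hQa]
    · simp [L, hLa, pderiv_linForm_of_ne hm, hm]

end Interpolation

section GradientMap

open LinearMap

variable {K : Type} [Field K] {k : ℕ} {n : Fin k → ℕ} {r : ℕ}

section

variable (d : Fin k → ℕ) (S : Fin r → Point K n)

noncomputable def gradEval :
    multihomogeneousForms K n d →ₗ[K] (Fin r × Var k n → K) where
  toFun F q := evalAt (S q.1) (pderiv q.2 (F : MvPolynomial (Var k n) K))
  map_add' F G := by ext; simp
  map_smul' c F := by ext; simp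

noncomputable def eulerDefect (i : Fin k) :
    (Fin r × Var k n → K) →ₗ[K] (Fin r × {ℓ // ℓ ≠ i} → K) where
  toFun g q := d i * (S q.1 q.2 ⬝ᵥ fun j => g (q.1, ⟨q.2, j⟩)) -
    d q.2 * (S q.1 i ⬝ᵥ fun j => g (q.1, ⟨i, j⟩))
  map_add' g g' := by ext; simp only [dotProduct, Pi.add_apply, mul_add, sum_add_distrib]; ring
  map_smul' c g := by
    ext
    simp only [dotProduct, Pi.smul_apply, smul_eq_mul, RingHom.id_apply, mul_sub, mul_sum]
    congr 1 <;> exact sum_congr rfl fun _ _ => by ring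

theorem eulerDefect_gradEval (i : Fin k) (F : multihomogeneousForms K n d) :
    eulerDefect d S i (gradEval d S F) = 0 := by
  ext q
  have hF : (F : MvPolynomial (Var k n) K).IsWeightedHomogeneous blockWeight d := F.2
  simp only [eulerDefect, gradEval, LinearMap.coe_mk, AddHom.coe_mk, Pi.zero_apply]
  rw [dotProduct_blockGrad hF, dotProduct_blockGrad hF]
  ring

theorem map_subtype_ker_gradEval :
    (ker (gradEval d S)).map (multihomogeneousForms K n d).subtype =
      svDblVanish K k n d S := by
  ext F
  simp [svDblVanish, gradEval, funext_iff, evalAt, mem_iInf, and_comm]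

theorem finrank_svDblVanish_add_finrank_range_gradEval :
    finrank K (svDblVanish K k n d S) + finrank K (LinearMap.range (gradEval d S)) =
      ∏ j, (n j + d j).choose (n j) := by
  have hV := finrank_multihomogeneousForms (n := n) K d
  have : FiniteDimensional K (multihomogeneousForms K n d) :=
    finite_of_finrank_pos (by rw [hV]; exact prod_pos fun j _ => Nat.choose_pos (by omega))
  rw [← map_subtype_ker_gradEval, finrank_map_subtype_eq, add_comm,
    finrank_range_add_finrank_ker, hV]

end

variable {d : Fin k → ℕ} {S : Fin r → Point K n} {i : Fin k}

theorem eulerDefect_surjective (hS0 : ∀ a ℓ, S a ℓ ≠ 0) (hd0 : (d i : K) ≠ 0) :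
    Function.Surjective (eulerDefect d S i) := by
  intro y
  choose c hc using fun a ℓ => exists_dotProduct_eq_one (hS0 a ℓ)
  refine ⟨fun q => if h : q.2.1 = i then 0 else y (q.1, ⟨q.2.1, h⟩) / d i * c q.1 q.2.1 q.2.2, ?_⟩
  ext ⟨a, ℓ, hℓ⟩
  have hℓblock : (fun j => (if h : ℓ = i then 0 else y (a, ⟨ℓ, h⟩) / d i * c a ℓ j : K)) =
      (y (a, ⟨ℓ, hℓ⟩) / d i) • c a ℓ := by
    ext j
    simp [hℓ]
  simp only [eulerDefect, LinearMap.coe_mk, AddHom.coe_mk, dite_true]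
  rw [hℓblock, dotProduct_smul, dotProduct_comm, hc]
  simp [dotProduct, mul_div_cancel₀ _ hd0]

theorem finrank_ker_eulerDefect (h : Function.Surjective (eulerDefect d S i)) :
    finrank K (ker (eulerDefect d S i)) = r * (∑ ℓ, n ℓ + 1) := by
  have hrank := finrank_range_add_finrank_ker (eulerDefect d S i)
  rw [range_eq_top.2 h, finrank_top, finrank_fintype_fun_eq_card,
    finrank_fintype_fun_eq_card] at hrank
  simp only [Fintype.card_prod, Fintype.card_fin, Fintype.card_sigma, Fintype.card_subtype_compl,
    Fintype.card_unique, sum_add_distrib, sum_const, card_univ, smul_eq_mul, mul_one] at hrank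
  have hsplit : r * (∑ ℓ, n ℓ + k) = r * (∑ ℓ, n ℓ + 1) + r * (k - 1) := by
    rw [← mul_add]
    have := i.pos
    congr 1
    omega
  omega

theorem exists_gradEval_eq_on_block (hS : NoncollinearBlock S i) (hS0 : ∀ a ℓ, S a ℓ ≠ 0)
    (hdi : 2 * r - 3 ≤ d i) (hd0 : (d i : K) ≠ 0) (g : Fin r × Var k n → K) :
    ∃ F, ∀ a j, gradEval d S F (a, ⟨i, j⟩) = g (a, ⟨i, j⟩) := by
  choose F hF hFb hFa using fun a =>
    exists_mem_blockGrad_eq hS hS0 hdi hd0 a fun j => g (a, ⟨i, j⟩)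
  refine ⟨∑ a, ⟨F a, hF a⟩, fun a j => ?_⟩
  simp only [map_sum, Finset.sum_apply, gradEval, LinearMap.coe_mk, AddHom.coe_mk]
  rw [sum_eq_single a (fun b _ hb => ((hFb b) a (Ne.symm hb)).2 _) (by simp), hFa]

theorem mem_range_gradEval_of_eq_zero_on_block (hS : NoncollinearBlock S i)
    (hS0 : ∀ a ℓ, S a ℓ ≠ 0) (hd : ∀ ℓ, 1 ≤ d ℓ) (hdi : 2 * r - 3 ≤ d i) (hd0 : (d i : K) ≠ 0)
    {g : Fin r × Var k n → K} (hg : g ∈ ker (eulerDefect d S i))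
    (hgi : ∀ a j, g (a, ⟨i, j⟩) = 0) : g ∈ range (gradEval d S) := by
  classical
  have hperp : ∀ a (ℓ : {ℓ // ℓ ≠ i}), S a ℓ ⬝ᵥ (fun j => g (a, ⟨ℓ, j⟩)) = 0 := fun a ℓ => by
    have h := congrFun (mem_ker.1 hg) (a, ℓ)
    simpa [eulerDefect, hgi, dotProduct, hd0] using h
  have hpiece : ∀ q : Fin r × {ℓ // ℓ ≠ i},
      (fun p => if p.1 = q.1 ∧ p.2.1 = q.2.1 then g p else 0) ∈ range (gradEval d S) := by
    rintro ⟨a, ℓ, hℓ⟩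
    obtain ⟨F, hF, hFb, hFa⟩ :=
      exists_mem_grad_eq_ite hS hS0 hdi hℓ (hd ℓ) a (fun v => g (a, v)) (hperp a ⟨ℓ, hℓ⟩)
    refine ⟨⟨F, hF⟩, funext fun ⟨b, v⟩ => ?_⟩
    by_cases hb : b = a
    · subst hb; simp [gradEval, hFa]
    · simp [gradEval, hb, (hFb b hb).2 v]
  have hsum : g = ∑ q : Fin r × {ℓ // ℓ ≠ i},
      fun p => if p.1 = q.1 ∧ p.2.1 = q.2.1 then g p else 0 := by
    ext ⟨b, m, j⟩
    rw [Finset.sum_apply]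
    by_cases hm : m = i
    · subst hm; simp [hgi]
    · rw [Fintype.sum_eq_single (b, ⟨m, hm⟩) fun q hq => if_neg ?_, if_pos ⟨rfl, rfl⟩]
      rintro ⟨rfl, h⟩
      exact hq (Prod.ext rfl (Subtype.ext h.symm))
  rw [hsum]
  exact sum_mem fun q _ => hpiece q

theorem range_gradEval_eq_ker_eulerDefect (hS : NoncollinearBlock S i) (hS0 : ∀ a ℓ, S a ℓ ≠ 0)
    (hd : ∀ ℓ, 1 ≤ d ℓ) (hdi : 2 * r - 3 ≤ d i) (hd0 : (d i : K) ≠ 0) :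
    range (gradEval d S) = ker (eulerDefect d S i) := by
  have hle : range (gradEval d S) ≤ ker (eulerDefect d S i) := by
    rintro _ ⟨F, rfl⟩
    exact eulerDefect_gradEval d S i F
  refine le_antisymm hle fun g hg => ?_
  obtain ⟨F, hF⟩ := exists_gradEval_eq_on_block hS hS0 hdi hd0 g
  have h := mem_range_gradEval_of_eq_zero_on_block hS hS0 hd hdi hd0
    (sub_mem hg (hle (mem_range_self _ F))) fun a j => by simp [hF]
  simpa using add_mem h (mem_range_self _ F)

end GradientMap

end SegreVeronese

open SegreVeronese

theorem sv_noncollinear_ruling_not_terracini_general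
    {K : Type} [Field K] [CharZero K]
    (k : ℕ) (n d : Fin k → ℕ)
    (hd : ∀ i, 1 ≤ d i)
    (r : ℕ)
    (S : Fin r → (i : Fin k) → (Fin (n i + 1) → K))
    (hS0 : ∀ a i, S a i ≠ 0)
    (hSd : ∀ a b, a ≠ b → ∃ i, ∀ c : K, S a i ≠ c • S b i)
    (i : Fin k) (hi : (d i + 3) / 2 = r)
    (hconst : ∀ ℓ, ℓ ≠ i → ∀ a b : Fin r, ∃ c : K, S a ℓ = c • S b ℓ)
    (hncol : 3 ≤ Module.finrank K ↥(Submodule.span K (Set.range fun a => S a i))) :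
    Module.finrank K ↥(svDblVanish K k n d S) + r * ((∑ j, n j) + 1)
      = ∏ j, Nat.choose (n j + d j) (n j) := by
  have hS : NoncollinearBlock S i := by
    refine ⟨fun a => hS0 a i, fun a b hab c => ?_, hncol⟩
    obtain ⟨ℓ, hℓ⟩ := hSd a b hab
    by_cases hℓi : ℓ = i
    · exact hℓi ▸ hℓ c
    · obtain ⟨c', hc'⟩ := hconst ℓ hℓi a b
      exact absurd hc' (hℓ c')
  have hdi : 2 * r - 3 ≤ d i := by omega
  have hd0 : (d i : K) ≠ 0 := Nat.cast_ne_zero.2 (Nat.one_le_iff_ne_zero.1 (hd i))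
  rw [← finrank_svDblVanish_add_finrank_range_gradEval d S,
    range_gradEval_eq_ker_eulerDefect hS hS0 hd hdi hd0,
    finrank_ker_eulerDefect (eulerDefect_surjective hS0 hd0)]

/-- **Non-collinear points on a ruling are not Terracini for Segre–Veronese varieties.**
Let `r = min_i ⌈(d i + 2)/2⌉ ≥ 3` (note `⌈(d+2)/2⌉ = (d+3)/2` with integer division) and
`J = {i : ⌈(d i + 2)/2⌉ = r}`.  Let `S` be a set of `r` distinct points of
`ℙ^{n 1} × ⋯ × ℙ^{n k}`.  If for some `i ∈ J` the `ℓ`-th components of all points of `S` are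
pairwise proportional for every `ℓ ≠ i`, while the `i`-th components are *not* collinear (they
span a subspace of `K^{n i + 1}` of dimension `≥ 3`), then the double points `2S` impose
independent conditions in multidegree `d`, i.e. `ν(S) ∉ Ter_r(SV)`. -/
theorem sv_noncollinear_ruling_not_terracini
    {K : Type} [Field K] [IsAlgClosed K] [CharZero K]
    (k : ℕ) (n d : Fin k → ℕ)
    (hn : ∀ i, 1 ≤ n i) (hd : ∀ i, 1 ≤ d i)
    (r : ℕ) (hr3 : 3 ≤ r)
    (hrle : ∀ i, r ≤ (d i + 3) / 2) (hrmem : ∃ i, (d i + 3) / 2 = r)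
    (S : Fin r → (i : Fin k) → (Fin (n i + 1) → K))
    (hS0 : ∀ a i, S a i ≠ 0)
    (hSd : ∀ a b, a ≠ b → ∃ i, ∀ c : K, S a i ≠ c • S b i)
    (i : Fin k) (hi : (d i + 3) / 2 = r)
    (hconst : ∀ ℓ, ℓ ≠ i → ∀ a b : Fin r, ∃ c : K, S a ℓ = c • S b ℓ)
    (hncol : 3 ≤ Module.finrank K ↥(Submodule.span K (Set.range fun a => S a i))) :
    Module.finrank K ↥(svDblVanish K k n d S) + r * ((∑ j, n j) + 1)
      = ∏ j, Nat.choose (n j + d j) (n j) :=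
  sv_noncollinear_ruling_not_terracini_general k n d hd r S hS0 hSd i hi hconst hncol
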